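/- arXiv:2112.03077 — 4 statements merged into one kernel-verified Lean document; each statement's English description precedes it below -/
import Mathlib

section
/- Let Λ be a nonempty finite set and, for each n ∈ Λ, let c_n be a nonnegative integer. If s(∑_{n∈Λ} 2^(c_n)) = 1, then for all n, m ∈ Λ one has |c_n − c_m| ≤ max{0, Card(Λ) − 2}, where Card denotes cardinality. -/
/-!
If `2 ^ t` divides a sum of `k` powers of two whose smallest exponent is `m`, then `t < m + k`:
either the smallest exponent occurs once, and then the sum is `2 ^ m` modulo `2 ^ (m + 1)`, or
two copies of `2 ^ m` merge into one `2 ^ (m + 1)`, which lowers `k` by one and raises the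
smallest exponent by at most one. When the sum is exactly `2 ^ t` and has at least two terms,
every exponent is also below `t`, so any two exponents differ by at most `k - 2`.
-/

/-- `s n` is the number of nonzero digits (ones) in the binary expansion of `n`. -/
def s (n : ℕ) : ℕ := (Nat.digits 2 n).count 1

lemma s_two_mul (n : ℕ) : s (2 * n) = s n := by
  rcases n.eq_zero_or_pos with rfl | hn
  · rfl
  · simp [s, Nat.digits_base_mul one_lt_two hn]

lemma s_two_mul_add_one (n : ℕ) : s (2 * n + 1) = s n + 1 := by
  simp [s, Nat.mul_add_div two_pos]

lemma eq_zero_of_s_eq_zero {n : ℕ} (h : s n = 0) : n = 0 := by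
  induction n using Nat.evenOddRec with
  | h0 => rfl
  | h_even n ih => rw [s_two_mul] at h; rw [ih h]
  | h_odd n ih => simp [s_two_mul_add_one] at h

lemma exists_eq_two_pow_of_s_eq_one {n : ℕ} (h : s n = 1) : ∃ t, n = 2 ^ t := by
  induction n using Nat.evenOddRec with
  | h0 => simp [s] at h
  | h_even n ih =>
    obtain ⟨t, rfl⟩ := ih (by rwa [s_two_mul] at h)
    exact ⟨t + 1, by ring⟩
  | h_odd n ih =>
    rw [s_two_mul_add_one, add_eq_right] at h
    exact ⟨0, by simp [eq_zero_of_s_eq_zero h]⟩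

theorem Multiset.lt_add_card_of_two_pow_dvd_sum {M : Multiset ℕ} {x t : ℕ} (hx : x ∈ M)
    (ht : 2 ^ t ∣ (M.map (2 ^ ·)).sum) : t < x + card M := by
  obtain ⟨m, hmM, hmin⟩ := M.toFinset.exists_min_image id ⟨x, mem_toFinset.2 hx⟩
  simp only [mem_toFinset, id] at hmM hmin
  suffices t < m + card M by have := hmin x hx; omega
  obtain ⟨N, rfl⟩ : ∃ N, M = m ::ₘ N := ⟨_, (cons_erase hmM).symm⟩
  by_cases hmN : m ∈ N
  · obtain ⟨L, rfl⟩ : ∃ L, N = m ::ₘ L := ⟨_, (cons_erase hmN).symm⟩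
    have hmerge : ((m ::ₘ m ::ₘ L).map (2 ^ ·)).sum = (((m + 1) ::ₘ L).map (2 ^ ·)).sum := by
      simp only [map_cons, sum_cons]; ring
    have ih := lt_add_card_of_two_pow_dvd_sum (mem_cons_self _ _) (hmerge ▸ ht)
    simp only [card_cons] at ih ⊢
    omega
  · have hN : 2 ^ (m + 1) ∣ (N.map (2 ^ ·)).sum := by
      refine dvd_sum fun y hy => ?_
      obtain ⟨z, hz, rfl⟩ := mem_map.1 hy
      have : m < z := lt_of_le_of_ne (hmin z (mem_cons_of_mem hz)) (by rintro rfl; exact hmN hz)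
      exact pow_dvd_pow 2 this
    have htm : t ≤ m := by
      by_contra! hlt
      rw [map_cons, sum_cons] at ht
      have := (Nat.dvd_add_left hN).1 ((pow_dvd_pow 2 hlt).trans ht)
      exact absurd (Nat.le_of_dvd (by positivity) this) (by rw [pow_succ]; omega)
    simp only [card_cons]
    omega
termination_by card M
decreasing_by simp_all

open Finset in
lemma add_two_le_add_card_of_sum_two_pow_eq {α : Type*} {Λ : Finset α} {c : α → ℕ} {t : ℕ}
    (h : ∑ i ∈ Λ, 2 ^ c i = 2 ^ t) {n m : α} (hn : n ∈ Λ) (hm : m ∈ Λ) (hnm : n ≠ m) :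
    c m + 2 ≤ c n + #Λ := by
  classical
  have hmt : c m < t := by
    have : 2 ^ c m + 2 ^ c n ≤ 2 ^ t := by
      rw [← h, ← sum_pair (f := fun i => 2 ^ c i) hnm.symm]
      exact sum_le_sum_of_subset (insert_subset hm (singleton_subset_iff.2 hn))
    exact (Nat.pow_lt_pow_iff_right one_lt_two).1 (by have := Nat.two_pow_pos (c n); omega)
  have htn : t < c n + #Λ := by
    have := Multiset.lt_add_card_of_two_pow_dvd_sum (Multiset.mem_map_of_mem c hn)
      (t := t) (by rw [Multiset.map_map]; exact h ▸ dvd_rfl)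
    simpa using this
  omega

theorem key_lemma_general {α : Type*} (Λ : Finset α) (c : α → ℕ)
    (h : s (∑ n ∈ Λ, 2 ^ c n) = 1) :
    ∀ n ∈ Λ, ∀ m ∈ Λ, |(c n : ℤ) - (c m : ℤ)| ≤ max 0 ((Λ.card : ℤ) - 2) := by
  intro n hn m hm
  obtain ⟨t, ht⟩ := exists_eq_two_pow_of_s_eq_one h
  rcases eq_or_ne n m with rfl | hnm
  · simp
  have hle := add_two_le_add_card_of_sum_two_pow_eq ht hn hm hnm
  have hge := add_two_le_add_card_of_sum_two_pow_eq ht hm hn hnm.symm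
  rw [abs_sub_le_iff]
  constructor <;> apply le_max_of_le_right <;> omega

theorem key_lemma {α : Type*} (Λ : Finset α) (hΛ : Λ.Nonempty) (c : α → ℕ)
    (h : s (∑ n ∈ Λ, 2 ^ c n) = 1) :
    ∀ n ∈ Λ, ∀ m ∈ Λ, |(c n : ℤ) - (c m : ℤ)| ≤ max 0 ((Λ.card : ℤ) - 2) :=
  key_lemma_general Λ c h
end

section
/- Let Λ be a finite set, let c_n be a nonnegative integer for each n ∈ Λ, and suppose Λ is the disjoint union of two nonempty subsets S_1 and S_2 such that for all n ∈ S_1 and all m ∈ S_2 one has c_n − c_m ≥ Card(Λ). Then s(∑_{n∈Λ} 2^(c_n)) = s(∑_{n∈S_1} 2^(c_n)) + s(∑_{n∈S_2} 2^(c_n)). -/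
/-! If `2 ^ k` exceeds the sum over `S₂` and divides the sum over `S₁`, the two sums occupy
disjoint blocks of binary digits, so their ones simply add up. With `k` the least exponent in
`S₁`, the sum over `S₂` has at most `#S₂ ≤ #Λ` terms, each at most `2 ^ (k - #Λ)`, hence is
below `2 ^ k`. -/

/-- The binary digits of `b + 2 ^ k * a` are those of `b`, padded with zeros to length `k`,
followed by those of `a`. -/
lemma s_add_two_pow_mul {a b k : ℕ} (hb : b < 2 ^ k) : s (b + 2 ^ k * a) = s b + s a := by
  rcases Nat.eq_zero_or_pos a with rfl | ha
  · simp [s]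
  have hlen : (Nat.digits 2 b).length ≤ k := (Nat.digits_length_le_iff one_lt_two b).2 hb
  have hdigits := Nat.digits_append_zeroes_append_digits (k := k - (Nat.digits 2 b).length)
    (n := b) one_lt_two ha
  rw [Nat.add_sub_cancel' hlen] at hdigits
  simp [s, ← hdigits, List.count_append, List.count_replicate]

lemma s_two_pow_mul (a k : ℕ) : s (2 ^ k * a) = s a := by
  simpa [s] using s_add_two_pow_mul (a := a) (Nat.two_pow_pos k)

lemma s_add_of_dvd_of_lt {a b k : ℕ} (ha : 2 ^ k ∣ a) (hb : b < 2 ^ k) :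
    s (a + b) = s a + s b := by
  obtain ⟨a, rfl⟩ := ha
  rw [add_comm, s_add_two_pow_mul hb, s_two_pow_mul, add_comm]

lemma Finset.sum_two_pow_lt_two_pow {α : Type*} {S : Finset α} {c : α → ℕ} {k : ℕ}
    (h : ∀ m ∈ S, c m + S.card ≤ k) : ∑ m ∈ S, 2 ^ c m < 2 ^ k := by
  refine Nat.lt_of_mul_lt_mul_right (a := 2 ^ S.card) ?_
  calc (∑ m ∈ S, 2 ^ c m) * 2 ^ S.card = ∑ m ∈ S, 2 ^ (c m + S.card) := by
        simp only [Finset.sum_mul, pow_add]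
    _ ≤ ∑ _m ∈ S, 2 ^ k := Finset.sum_le_sum fun m hm => Nat.pow_le_pow_right two_pos (h m hm)
    _ = S.card * 2 ^ k := by rw [Finset.sum_const, smul_eq_mul]
    _ < 2 ^ S.card * 2 ^ k := Nat.mul_lt_mul_of_pos_right S.card.lt_two_pow_self (by positivity)
    _ = 2 ^ k * 2 ^ S.card := mul_comm _ _

theorem s_add_of_separated_general {α : Type*} [DecidableEq α]
    (Λ S₁ S₂ : Finset α) (c : α → ℕ)
    (hS₁ : S₁.Nonempty)
    (hdisj : Disjoint S₁ S₂) (hunion : S₁ ∪ S₂ = Λ)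
    (hsep : ∀ n ∈ S₁, ∀ m ∈ S₂, (Λ.card : ℤ) ≤ (c n : ℤ) - (c m : ℤ)) :
    s (∑ n ∈ Λ, 2 ^ c n) = s (∑ n ∈ S₁, 2 ^ c n) + s (∑ n ∈ S₂, 2 ^ c n) := by
  obtain ⟨n₀, hn₀, hmin⟩ := S₁.exists_min_image c hS₁
  have hcard : S₂.card ≤ Λ.card := Finset.card_le_card (hunion ▸ Finset.subset_union_right)
  have hsmall : ∑ m ∈ S₂, 2 ^ c m < 2 ^ c n₀ :=
    Finset.sum_two_pow_lt_two_pow fun m hm => by have := hsep n₀ hn₀ m hm; omega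
  have hdvd : 2 ^ c n₀ ∣ ∑ n ∈ S₁, 2 ^ c n :=
    Finset.dvd_sum fun n hn => pow_dvd_pow 2 (hmin n hn)
  rw [← hunion, Finset.sum_union hdisj, s_add_of_dvd_of_lt hdvd hsmall]

theorem s_add_of_separated {α : Type*} [DecidableEq α]
    (Λ S₁ S₂ : Finset α) (c : α → ℕ)
    (hS₁ : S₁.Nonempty) (hS₂ : S₂.Nonempty)
    (hdisj : Disjoint S₁ S₂) (hunion : S₁ ∪ S₂ = Λ)
    (hsep : ∀ n ∈ S₁, ∀ m ∈ S₂, (Λ.card : ℤ) ≤ (c n : ℤ) - (c m : ℤ)) :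
    s (∑ n ∈ Λ, 2 ^ c n) = s (∑ n ∈ S₁, 2 ^ c n) + s (∑ n ∈ S₂, 2 ^ c n) :=
  s_add_of_separated_general Λ S₁ S₂ c hS₁ hdisj hunion hsep
end

section
/- Let ℓ, m ≥ 2 be fixed integers. The set of pairs (a, b) of positive odd integers with s(a) = ℓ, s(b) = m, and s(ab) = 2 is finite. -/
open Finset

theorem s_eq_card_bitIndices (n : ℕ) : s n = #n.bitIndices.toFinset := by
  rw [List.toFinset_card_of_nodup Nat.bitIndices_nodup]
  induction n using Nat.binaryRec with
  | zero => simp [s]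
  | bit b n ih =>
    rcases Nat.eq_zero_or_pos n with rfl | hn
    · cases b <;> simp [s]
    have hpos : 0 < n.bit b := by cases b <;> simp [Nat.bit]; omega
    rw [s, Nat.digits_def' (by norm_num) hpos]
    cases b <;> simp [← ih, Nat.mul_add_div, s]

theorem zero_mem_bitIndices_toFinset {n : ℕ} (hn : Odd n) : 0 ∈ n.bitIndices.toFinset := by
  simpa [Nat.testBit_zero] using Nat.odd_iff.mp hn

theorem exists_eq_two_pow_add_one_of_s_eq_two {n : ℕ} (hn : Odd n) (hs : s n = 2) :
    ∃ k, n = 2 ^ k + 1 := by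
  obtain ⟨i, j, hij, hbits⟩ := card_eq_two.mp ((s_eq_card_bitIndices n).symm.trans hs)
  have h0 := zero_mem_bitIndices_toFinset hn
  have hsum := sum_toFinset_bitIndices_two_pow n
  rw [hbits, sum_pair hij] at hsum
  rw [hbits, mem_insert, mem_singleton] at h0
  rcases h0 with rfl | rfl
  · exact ⟨j, by omega⟩
  · exact ⟨i, by omega⟩

theorem exists_two_pow_add_one_le {n : ℕ} (hn : Odd n) (hs : 2 ≤ s n) :
    ∃ i ∈ n.bitIndices.toFinset, i ≠ 0 ∧ 2 ^ i + 1 ≤ n := by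
  have h0 := zero_mem_bitIndices_toFinset hn
  obtain ⟨i, hi⟩ : (n.bitIndices.toFinset.erase 0).Nonempty := by
    rw [← card_pos, card_erase_of_mem h0, ← s_eq_card_bitIndices]; omega
  obtain ⟨hi0, hi⟩ := mem_erase.mp hi
  refine ⟨i, hi, hi0, ?_⟩
  calc 2 ^ i + 1 = ∑ j ∈ {i, 0}, 2 ^ j := by rw [sum_pair hi0, pow_zero]
    _ ≤ ∑ j ∈ n.bitIndices.toFinset, 2 ^ j := sum_le_sum_of_subset (by grind)
    _ = n := sum_toFinset_bitIndices_two_pow n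

section SumTwoPow

variable {ι : Type*} {P : Finset ι} {f : ι → ℕ} {n : ℕ}

theorem exists_exponent_mem_Ioc_of_sum_two_pow_eq (hsum : ∑ q ∈ P, 2 ^ f q = 2 ^ n) {p : ι}
    (hp : p ∈ P) (hn : f p + #P < n) : ∃ q ∈ P, f p < f q ∧ f q ≤ f p + #P := by
  by_contra! hgap
  set low := ∑ q ∈ P with f q ≤ f p, 2 ^ f q
  set high := ∑ q ∈ P with ¬f q ≤ f p, 2 ^ f q
  have hlow_pos : 0 < low := sum_pos' (fun _ _ ↦ by positivity) ⟨p, by simp [hp]⟩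
  have hlow_lt : low < 2 ^ (f p + #P) :=
    calc low ≤ #{q ∈ P | f q ≤ f p} • 2 ^ f p :=
          sum_le_card_nsmul _ _ _ fun q hq ↦ Nat.pow_le_pow_right two_pos (mem_filter.mp hq).2
      _ ≤ #P * 2 ^ f p := by rw [smul_eq_mul]; gcongr; exact filter_subset _ _
      _ < 2 ^ #P * 2 ^ f p := by gcongr; exact Nat.lt_two_pow_self
      _ = 2 ^ (f p + #P) := by rw [← pow_add, add_comm]
  -- With no exponent in `(f p, f p + #P]`, the terms of `low` would have to carry past the gap.
  have hhigh : 2 ^ (f p + #P + 1) ∣ high := dvd_sum fun q hq ↦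
    pow_dvd_pow 2 (hgap q (mem_filter.mp hq).1 (by simpa using (mem_filter.mp hq).2))
  have htotal : 2 ^ (f p + #P + 1) ∣ low + high := by
    rw [sum_filter_add_sum_filter_not, hsum]; exact pow_dvd_pow 2 hn
  have hlow : 2 ^ (f p + #P + 1) ∣ low := (Nat.dvd_add_left hhigh).mp htotal
  have := Nat.le_of_dvd hlow_pos hlow
  rw [pow_succ] at this
  omega

theorem le_add_card_mul_card_filter_of_sum_two_pow_eq (hsum : ∑ q ∈ P, 2 ^ f q = 2 ^ n) {p : ι}
    (hp : p ∈ P) : n ≤ f p + #P * #{q ∈ P | f p ≤ f q} := by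
  suffices ∀ k, ∀ p ∈ P, #{q ∈ P | f p ≤ f q} ≤ k → n ≤ f p + #P * k from this _ p hp le_rfl
  intro k
  induction k with
  | zero =>
    intro p hp hk
    exact absurd hk (card_pos.mpr ⟨p, by simp [hp]⟩).not_ge
  | succ k ih =>
    intro p hp hk
    rw [Nat.mul_succ]
    by_cases hn : f p + #P < n
    · obtain ⟨q, hq, hpq, hqp⟩ := exists_exponent_mem_Ioc_of_sum_two_pow_eq hsum hp hn
      have hssub : {r ∈ P | f q ≤ f r} ⊂ {r ∈ P | f p ≤ f r} :=
        (ssubset_iff_of_subset fun r hr ↦ by grind).mpr ⟨p, by simp [hp], by simp [hpq]⟩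
      have := ih q hq (by have := card_lt_card hssub; omega)
      omega
    · omega

theorem le_add_card_sq_of_sum_two_pow_eq (hsum : ∑ q ∈ P, 2 ^ f q = 2 ^ n) {p : ι}
    (hp : p ∈ P) : n ≤ f p + #P ^ 2 := by
  have := le_add_card_mul_card_filter_of_sum_two_pow_eq hsum hp
  have : #P * #{q ∈ P | f p ≤ f q} ≤ #P ^ 2 := by
    rw [sq]; exact Nat.mul_le_mul_left _ (card_filter_le _ _)
  omega

end SumTwoPow

theorem lt_two_mul_sq_of_mul_eq_two_pow_add_one {a b n : ℕ} (ha : Odd a) (hb : Odd b)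
    (hsa : 2 ≤ s a) (hsb : 2 ≤ s b) (hab : a * b = 2 ^ n + 1) : n < 2 * (s a * s b) ^ 2 := by
  set A := a.bitIndices.toFinset
  set B := b.bitIndices.toFinset
  set P := (A ×ˢ B).erase (0, 0)
  have h0A : 0 ∈ A := zero_mem_bitIndices_toFinset ha
  have h0B : 0 ∈ B := zero_mem_bitIndices_toFinset hb
  have h00 : (0, 0) ∈ A ×ˢ B := mem_product.mpr ⟨h0A, h0B⟩
  have hsum : ∑ q ∈ P, 2 ^ (q.1 + q.2) = 2 ^ n := by
    have hprod : ∑ q ∈ A ×ˢ B, 2 ^ (q.1 + q.2) = a * b := by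
      simp only [sum_product, pow_add, ← sum_mul_sum, A, B, sum_toFinset_bitIndices_two_pow]
    rw [← add_sum_erase _ _ h00, hab, add_zero, pow_zero, add_comm] at hprod
    exact Nat.add_right_cancel hprod
  have hcard : #P ≤ s a * s b := by
    rw [s_eq_card_bitIndices a, s_eq_card_bitIndices b, ← card_product]; exact card_erase_le
  obtain ⟨α, hαA, hα0, hαa⟩ := exists_two_pow_add_one_le ha hsa
  obtain ⟨β, hβB, hβ0, hβb⟩ := exists_two_pow_add_one_le hb hsb
  have hαβ : α + β < n := by
    have hle : (2 ^ α + 1) * (2 ^ β + 1) ≤ 2 ^ n + 1 := hab ▸ Nat.mul_le_mul hαa hβb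
    rw [← Nat.pow_lt_pow_iff_right one_lt_two, pow_add]
    have := Nat.two_pow_pos α
    generalize 2 ^ α = x at *
    generalize 2 ^ β = y at *
    nlinarith
  have hα := le_add_card_sq_of_sum_two_pow_eq hsum (p := (α, 0))
    (by simp [P, A, B, hα0, hαA, h0B])
  have hβ := le_add_card_sq_of_sum_two_pow_eq hsum (p := (0, β))
    (by simp [P, A, B, hβ0, hβB, h0A])
  have : #P ^ 2 ≤ (s a * s b) ^ 2 := by gcongr
  simp only at hα hβ
  omega

theorem finitely_many_solutions_k2 (ℓ m : ℕ) (hℓ : 2 ≤ ℓ) (hm : 2 ≤ m) :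
    {p : ℕ × ℕ | 0 < p.1 ∧ 0 < p.2 ∧ Odd p.1 ∧ Odd p.2 ∧
      s p.1 = ℓ ∧ s p.2 = m ∧ s (p.1 * p.2) = 2}.Finite := by
  refine (Set.finite_Iic ((2 ^ (2 * (ℓ * m) ^ 2), 2 ^ (2 * (ℓ * m) ^ 2)) : ℕ × ℕ)).subset ?_
  rintro ⟨a, b⟩ ⟨ha0, hb0, ha, hb, rfl, rfl, hs⟩
  obtain ⟨k, hk⟩ := exists_eq_two_pow_add_one_of_s_eq_two (ha.mul hb) hs
  have hab : a * b ≤ 2 ^ (2 * (s a * s b) ^ 2) := by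
    rw [hk, Nat.add_one_le_iff]
    exact Nat.pow_lt_pow_right one_lt_two (lt_two_mul_sq_of_mul_eq_two_pow_add_one ha hb hℓ hm hk)
  exact ⟨(Nat.le_mul_of_pos_right a hb0).trans hab, (Nat.le_mul_of_pos_left b ha0).trans hab⟩
end

section
/- Let ℓ, m ≥ 2 be integers with max{ℓ, m} ≥ 3, and let a, b ≥ 1 be odd integers with s(a) = ℓ, s(b) = m, and s(ab) = 3. Write a = ∑_{i=0}^{ℓ−1} 2^(a_i) and b = ∑_{j=0}^{m−1} 2^(b_j) with a_{ℓ−1} > ⋯ > a_1 > a_0 = 0 and b_{m−1} > ⋯ > b_1 > b_0 = 0, and suppose a_1 < b_1. Then ℓ ≥ 3. -/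
lemma s_rec (x : ℕ) : s x = (if x % 2 = 1 then 1 else 0) + s (x / 2) := by
  rcases Nat.eq_zero_or_pos x with h | h
  · subst h; simp [s]
  · rw [s, Nat.digits_def' (by norm_num : (1:ℕ) < 2) h, List.count_cons]
    have : x % 2 = 0 ∨ x % 2 = 1 := Nat.mod_two_eq_zero_or_one x
    rcases this with h2 | h2 <;> simp [h2, s] <;> omega

lemma s_eq_zero {x : ℕ} (h : s x = 0) : x = 0 := by
  induction x using Nat.strong_induction_on with
  | _ x ih =>
    rcases Nat.eq_zero_or_pos x with h0 | h0
    · exact h0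
    · rw [s_rec] at h
      have h2 : x % 2 = 0 := by split at h <;> omega
      have := ih (x / 2) (Nat.div_lt_self h0 one_lt_two) (by omega)
      omega

lemma s_eq_one {x : ℕ} (h : s x = 1) : ∃ k, x = 2 ^ k := by
  induction x using Nat.strong_induction_on with
  | _ x ih =>
    have hx0 : x ≠ 0 := by rintro rfl; simp [s] at h
    rw [s_rec] at h
    rcases Nat.mod_two_eq_zero_or_one x with h2 | h2
    · simp [h2] at h
      obtain ⟨k, hk⟩ := ih (x / 2) (Nat.div_lt_self (by omega) one_lt_two) h
      exact ⟨k + 1, by omega⟩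
    · simp [h2] at h
      have := s_eq_zero h
      exact ⟨0, by omega⟩

lemma s_add_pow_mul (k : ℕ) : ∀ x y : ℕ, x < 2 ^ k → s (x + 2 ^ k * y) = s x + s y := by
  induction k with
  | zero =>
    intro x y hx
    interval_cases x
    simp [s]
  | succ k ih =>
    intro x y hx
    rw [s_rec, s_rec x]
    have h2 : 2 ^ (k + 1) * y = 2 * (2 ^ k * y) := by ring
    have hmod : (x + 2 ^ (k + 1) * y) % 2 = x % 2 := by omega
    have hdiv : (x + 2 ^ (k + 1) * y) / 2 = x / 2 + 2 ^ k * y := by omega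
    rw [hmod, hdiv, ih (x / 2) y (by omega)]
    omega

theorem ell_ge_three_case (ℓ m : ℕ) (hℓ : 2 ≤ ℓ) (hm : 2 ≤ m)
    (hmax : 3 ≤ max ℓ m)
    (a b : ℕ) (ha : 1 ≤ a) (hb : 1 ≤ b) (hoa : Odd a) (hob : Odd b)
    (hsa : s a = ℓ) (hsb : s b = m) (hsab : s (a * b) = 3)
    (A : Fin ℓ → ℕ) (B : Fin m → ℕ)
    (hAmono : StrictMono A) (hBmono : StrictMono B)
    (hA0 : A ⟨0, by omega⟩ = 0) (hB0 : B ⟨0, by omega⟩ = 0)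
    (haA : a = ∑ i, 2 ^ A i) (hbB : b = ∑ j, 2 ^ B j)
    (hab1 : A ⟨1, by omega⟩ < B ⟨1, by omega⟩) :
    3 ≤ ℓ := by
  by_contra hcon
  have hl2 : ℓ = 2 := by omega
  subst hl2
  have hm0 : 0 < m := by omega
  have hm1 : 1 < m := by omega
  have hA0' : A 0 = 0 := hA0
  have hB0' : B ⟨0, hm0⟩ = 0 := hB0
  obtain ⟨t, ht⟩ : ∃ t, A 1 = t := ⟨_, rfl⟩
  have hab1' : t < B ⟨1, hm1⟩ := ht ▸ hab1
  have ht1 : 1 ≤ t := by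
    have := hAmono (show (0 : Fin 2) < 1 by decide)
    rw [hA0', ht] at this
    omega
  have ha_eq : a = 1 + 2 ^ t := by
    rw [haA, Fin.sum_univ_two, hA0', ht, pow_zero]
  have hdvd : 2 ^ (t + 1) ∣ ∑ j ∈ Finset.univ.erase (⟨0, hm0⟩ : Fin m), 2 ^ B j := by
    refine Finset.dvd_sum fun j hj => pow_dvd_pow 2 ?_
    have hle : (⟨1, hm1⟩ : Fin m) ≤ j := by
      have hj0 : j ≠ ⟨0, hm0⟩ := (Finset.mem_erase.mp hj).1
      have : (j : ℕ) ≠ 0 := fun h => hj0 (Fin.ext h)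
      exact Fin.mk_le_of_le_val (by omega)
    exact le_trans hab1' (hBmono.monotone hle)
  obtain ⟨c, hc0⟩ := hdvd
  have hb_eq : b = 1 + 2 ^ (t + 1) * c := by
    rw [hbB, ← Finset.add_sum_erase _ _ (Finset.mem_univ (⟨0, hm0⟩ : Fin m)), hB0', hc0,
      pow_zero]
  have h2t : 2 ≤ 2 ^ t := by
    calc 2 = 2 ^ 1 := rfl
    _ ≤ 2 ^ t := Nat.pow_le_pow_right (by norm_num) ht1
  have hab : a * b = (1 + 2 ^ t) + 2 ^ (t + 1) * (a * c) := by
    calc a * b = a * 1 + 2 ^ (t + 1) * (a * c) := by rw [hb_eq]; ring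
    _ = (1 + 2 ^ t) + 2 ^ (t + 1) * (a * c) := by rw [mul_one, ha_eq]
  have hlt : 1 + 2 ^ t < 2 ^ (t + 1) := by rw [pow_succ]; omega
  have hs1 : s 1 = 1 := by simp [s]
  have hs2 : s (1 + 2 ^ t) = 2 := by
    have := s_add_pow_mul t 1 1 (by omega)
    rw [mul_one] at this
    rw [this, hs1]
  have hkey : s (a * c) = 1 := by
    have := s_add_pow_mul (t + 1) (1 + 2 ^ t) (a * c) hlt
    rw [← hab, hsab, hs2] at this
    omega
  obtain ⟨k, hk⟩ := s_eq_one hkey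
  have hdvd2 : a ∣ 2 ^ k := ⟨c, hk.symm⟩
  have hcop : Nat.Coprime a 2 := Nat.coprime_two_right.mpr hoa
  have : a = 1 := (hcop.pow_right k).eq_one_of_dvd hdvd2
  omega
end
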